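/- Let A and B be square complex matrices of the same size satisfying A² = I, B² = I, and A B = −B A, and let v be a vector with B v = v. Then for all real numbers θ and t, the time-evolved state satisfies exp(tθ • (A B)) (cos θ • v + sin θ • (A v)) = cos((1+t)θ) • v + sin((1+t)θ) • (A v). In particular, choosing t so that (1+t)θ = π/2 drives the system from the state cos θ • v + sin θ • A v to the target state A v. -/

import Mathlib

open Matrix

/-- `a + b i ↦ a + b J` is a continuous `ℝ`-algebra map `ℂ → 𝔸`; it commutes with `exp` and
sends `exp (c i) = cos c + i sin c` to the right-hand side. -/
theorem NormedSpace.exp_real_smul_of_mul_self_eq_neg_one {𝔸 : Type*} [NormedRing 𝔸]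
    [NormedAlgebra ℝ 𝔸] [CompleteSpace 𝔸] {J : 𝔸} (hJ : J * J = -1) (c : ℝ) :
    exp (c • J) = Real.cos c • (1 : 𝔸) + Real.sin c • J := by
  let _ : Algebra ℚ 𝔸 := Algebra.compHom 𝔸 (algebraMap ℚ ℝ)
  set φ := Complex.liftAux J hJ
  have hφ : Continuous φ := φ.toLinearMap.continuous_of_finiteDimensional
  have hcJ : c • J = φ (c * Complex.I) := by simp [φ, Complex.liftAux_apply]
  rw [hcJ, ← map_exp φ hφ, ← Complex.exp_eq_exp_ℂ, Complex.exp_mul_I]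
  simp [φ, Complex.liftAux_apply, Algebra.algebraMap_eq_smul_one, ← Complex.ofReal_cos,
    ← Complex.ofReal_sin]

theorem Matrix.exp_ofReal_smul_of_mul_self_eq_neg_one {m : Type*} [Fintype m] [DecidableEq m]
    {J : Matrix m m ℂ} (hJ : J * J = -1) (c : ℝ) :
    NormedSpace.exp ((c : ℂ) • J) =
      (Real.cos c : ℂ) • (1 : Matrix m m ℂ) + (Real.sin c : ℂ) • J := by
  -- `letI`, not `let`: these instances must unfold to the ambient ring and topology of matrices.
  letI := Matrix.linftyOpNormedRing (n := m) (α := ℂ)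
  letI := Matrix.linftyOpNormedAlgebra (R := ℝ) (n := m) (α := ℂ)
  simp only [Complex.coe_smul]
  exact NormedSpace.exp_real_smul_of_mul_self_eq_neg_one hJ c

theorem Matrix.mulVec_rotation {m R : Type*} [Fintype m] [DecidableEq m] [CommRing R]
    {J : Matrix m m R} {v w : m → R} (hv : J *ᵥ v = w) (hw : J *ᵥ w = -v) (a b c d : R) :
    (a • 1 + b • J) *ᵥ (c • v + d • w) = (a * c - b * d) • v + (a * d + b * c) • w := by
  simp only [add_mulVec, smul_mulVec, one_mulVec, mulVec_add, mulVec_smul, hv, hw]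
  module

section Anticommute

variable {R : Type*} [Ring R] {A B : R}

theorem mul_mul_self_eq_neg_of_anticomm (hA : A * A = 1) (hAB : A * B = -(B * A)) :
    A * B * A = -B := by
  rw [hAB, neg_mul, mul_assoc, hA, mul_one]

theorem mul_mul_mul_self_eq_neg_one_of_anticomm (hA : A * A = 1) (hB : B * B = 1)
    (hAB : A * B = -(B * A)) : A * B * (A * B) = -1 := by
  rw [← mul_assoc, mul_mul_self_eq_neg_of_anticomm hA hAB, neg_mul, hB]

end Anticommute

theorem hamiltonian_evolution_rotation (N : ℕ)
    (A B : Matrix (Fin N) (Fin N) ℂ)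
    (hA : A * A = 1) (hB : B * B = 1) (hAB : A * B = -(B * A))
    (v : Fin N → ℂ) (hv : B.mulVec v = v) :
    ∀ θ t : ℝ,
      (NormedSpace.exp (((t * θ : ℝ) : ℂ) • (A * B))).mulVec
          ((Real.cos θ : ℂ) • v + (Real.sin θ : ℂ) • A.mulVec v)
        = (Real.cos ((1 + t) * θ) : ℂ) • v
          + (Real.sin ((1 + t) * θ) : ℂ) • A.mulVec v := by
  intro θ t
  have hJv : (A * B) *ᵥ v = A *ᵥ v := by rw [← mulVec_mulVec, hv]
  have hJAv : (A * B) *ᵥ (A *ᵥ v) = -v := by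
    rw [mulVec_mulVec, mul_mul_self_eq_neg_of_anticomm hA hAB, neg_mulVec, hv]
  rw [exp_ofReal_smul_of_mul_self_eq_neg_one (mul_mul_mul_self_eq_neg_one_of_anticomm hA hB hAB),
    mulVec_rotation hJv hJAv, show (1 + t) * θ = t * θ + θ by ring, Real.cos_add, Real.sin_add]
  push_cast
  ring_nf
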